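/- arXiv:1502.03050 — 3 statements merged into one kernel-verified Lean document; each statement's English description precedes it below -/
import Mathlib

section
/- Let $c, A > 0$ and let $M : (0, \infty) \to [0,1]$ be a differentiable, nondecreasing function satisfying $1 - M(h) \leq A\, M(h)\, M'(h)$ for all $h > 0$, and suppose $\lim_{h \to 0^+} M(h) = 0$. Then there exists a constant $c' > 0$ such that $M(h) \geq c' \sqrt{h}$ for all $h \in (0,1]$. -/
/-!
Where `M ≤ 1/2`, the inequality gives `A M M' ≥ 1 - M ≥ 1/2`, so `t ↦ A M(t)² - t` is
nondecreasing there. By monotonicity of `M` this holds on all of `(0, h]` once `M h ≤ 1/2`, and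
since `M(0+) = 0` we get `h ≤ A M(h)²`, i.e. `M h ≥ √h / √A`. Where `M h > 1/2` the bound
`M h ≥ √h / 2` is trivial for `h ≤ 1`.
-/

open Set Filter Topology

theorem MonotoneOn.le_of_tendsto_nhdsGT {g : ℝ → ℝ} {a b L : ℝ} (hab : a < b)
    (hg : MonotoneOn g (Ioc a b)) (hlim : Tendsto g (𝓝[>] a) (𝓝 L)) : L ≤ g b :=
  le_of_tendsto hlim <| by
    filter_upwards [Ioc_mem_nhdsGT hab] with t ht using hg ht (right_mem_Ioc.2 hab) ht.2

section DifferentialInequality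

variable {A : ℝ} {M M' : ℝ → ℝ}

theorem monotoneOn_mul_sq_sub_of_le_half (hdiff : ∀ t, 0 < t → HasDerivAt M (M' t) t)
    (hmono : ∀ h₁ h₂, 0 < h₁ → h₁ ≤ h₂ → M h₁ ≤ M h₂)
    (hineq : ∀ t, 0 < t → 1 - M t ≤ A * M t * M' t) {h : ℝ} (hMh : M h ≤ 1 / 2) :
    MonotoneOn (fun t => A * M t ^ 2 - t) (Ioc 0 h) := by
  have hderiv : ∀ t, 0 < t → HasDerivAt (fun t => A * M t ^ 2 - t) (2 * A * M t * M' t - 1) t :=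
    fun t ht => ((((hdiff t ht).fun_pow 2).const_mul A).sub (hasDerivAt_id' t)).congr_deriv
      (by ring)
  refine monotoneOn_of_hasDerivWithinAt_nonneg (convex_Ioc 0 h)
    (fun t ht => (hderiv t ht.1).continuousAt.continuousWithinAt)
    (fun t ht => (hderiv t (interior_subset ht).1).hasDerivWithinAt) fun t ht => ?_
  rw [interior_Ioc] at ht
  have hMt : M t ≤ M h := hmono t h ht.1 ht.2.le
  linarith [hineq t ht.1]

theorem le_mul_sq_of_le_half (hdiff : ∀ t, 0 < t → HasDerivAt M (M' t) t)
    (hmono : ∀ h₁ h₂, 0 < h₁ → h₁ ≤ h₂ → M h₁ ≤ M h₂)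
    (hineq : ∀ t, 0 < t → 1 - M t ≤ A * M t * M' t)
    (hlim : Tendsto M (𝓝[>] 0) (𝓝 0)) {h : ℝ} (hh : 0 < h) (hMh : M h ≤ 1 / 2) :
    h ≤ A * M h ^ 2 := by
  have hg_lim : Tendsto (fun t => A * M t ^ 2 - t) (𝓝[>] 0) (𝓝 0) := by
    simpa using ((hlim.pow 2).const_mul A).sub (tendsto_id.mono_left nhdsWithin_le_nhds)
  have := (monotoneOn_mul_sq_sub_of_le_half hdiff hmono hineq hMh).le_of_tendsto_nhdsGT hh hg_lim
  linarith

end DifferentialInequality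

theorem stmt_6_general (A : ℝ) (hA : 0 < A) (M M' : ℝ → ℝ)
    (hdiff : ∀ h, 0 < h → HasDerivAt M (M' h) h)
    (hmono : ∀ h₁ h₂, 0 < h₁ → h₁ ≤ h₂ → M h₁ ≤ M h₂)
    (hrange : ∀ h, 0 < h → M h ∈ Set.Icc (0 : ℝ) 1)
    (hineq : ∀ h, 0 < h → 1 - M h ≤ A * M h * M' h)
    (hlim : Filter.Tendsto M (nhdsWithin 0 (Set.Ioi 0)) (nhds 0)) :
    ∃ c' : ℝ, 0 < c' ∧ ∀ h ∈ Set.Ioc (0 : ℝ) 1, M h ≥ c' * Real.sqrt h := by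
  have hsqrtA : 0 < √A := Real.sqrt_pos.2 hA
  refine ⟨min (1 / 2) (√A)⁻¹, by positivity, fun h ⟨hh, hh1⟩ => ?_⟩
  rcases le_or_gt (M h) (1 / 2) with hMh | hMh
  · have hsq : h ≤ A * M h ^ 2 := le_mul_sq_of_le_half hdiff hmono hineq hlim hh hMh
    have hsqrt : √h ≤ √A * M h := by
      rw [Real.sqrt_le_left (by positivity [(hrange h hh).1]), mul_pow, Real.sq_sqrt hA.le]
      exact hsq
    calc min (1 / 2) (√A)⁻¹ * √h ≤ (√A)⁻¹ * √h := by gcongr; exact min_le_right _ _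
      _ ≤ M h := by rwa [inv_mul_le_iff₀ hsqrtA]
  · have hsqrt_le : √h ≤ 1 := Real.sqrt_le_one.2 hh1
    calc min (1 / 2) (√A)⁻¹ * √h ≤ 1 / 2 * 1 := by gcongr; exact min_le_left _ _
      _ ≤ M h := by linarith

theorem stmt_6 (c A : ℝ) (hc : 0 < c) (hA : 0 < A) (M M' : ℝ → ℝ)
    (hdiff : ∀ h, 0 < h → HasDerivAt M (M' h) h)
    (hmono : ∀ h₁ h₂, 0 < h₁ → h₁ ≤ h₂ → M h₁ ≤ M h₂)
    (hrange : ∀ h, 0 < h → M h ∈ Set.Icc (0 : ℝ) 1)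
    (hineq : ∀ h, 0 < h → 1 - M h ≤ A * M h * M' h)
    (hlim : Filter.Tendsto M (nhdsWithin 0 (Set.Ioi 0)) (nhds 0)) :
    ∃ c' : ℝ, 0 < c' ∧ ∀ h ∈ Set.Ioc (0 : ℝ) 1, M h ≥ c' * Real.sqrt h :=
  stmt_6_general A hA M M' hdiff hmono hrange hineq hlim
end

section
/- Let $A > 0$ and let $M : (0, \infty) \to [0,1]$ be a differentiable, nondecreasing function satisfying $1 - M(h)^2 \leq A\, M(h)^2\, M'(h)$ for all $h > 0$, with $\lim_{h \to 0^+} M(h) = 0$. Then there exists a constant $c > 0$ such that $M(h) \geq c\, h^{1/3}$ for all $h \in (0,1]$. -/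
/-!
Near `0` the limit hypothesis gives `|M| ≤ 1/2`, so `1 - M² ≥ 3/4` and the differential
inequality yields `(M³)' = 3 M² M' ≥ 9 / (4A)`. Integrating from `0`, where `M` vanishes, gives
`M(h)³ ≥ 9h / (4A)` on some interval `(0, δ)`; monotonicity of `M` then carries the resulting
bound `M(h) ≳ h^{1/3}` from `(0, δ)` to `(0, 1]`.
-/

open Set Filter Topology

theorem add_mul_sub_le_of_hasDerivAt_of_tendsto_nhdsGT {f f' : ℝ → ℝ} {a b K L : ℝ}
    (hf : ∀ x ∈ Ioo a b, HasDerivAt f (f' x) x) (hK : ∀ x ∈ Ioo a b, K ≤ f' x)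
    (hlim : Tendsto f (𝓝[>] a) (𝓝 L)) {x : ℝ} (hx : x ∈ Ioo a b) :
    L + K * (x - a) ≤ f x := by
  have hg : ∀ y ∈ Ioo a b, HasDerivAt (fun y => f y - K * y) (f' y - K) y := fun y hy =>
    ((hf y hy).sub ((hasDerivAt_id' y).const_mul K)).congr_deriv (by ring)
  have hmono : MonotoneOn (fun y => f y - K * y) (Ioo a b) := by
    refine monotoneOn_of_hasDerivWithinAt_nonneg (f' := fun y => f' y - K) (convex_Ioo a b)
      (fun y hy => (hg y hy).continuousAt.continuousWithinAt) (fun y hy => ?_) (fun y hy => ?_)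
    all_goals rw [interior_Ioo] at hy
    · exact (hg y hy).hasDerivWithinAt
    · exact sub_nonneg.mpr (hK y hy)
  have hglim : Tendsto (fun y => f y - K * y) (𝓝[>] a) (𝓝 (L - K * a)) :=
    hlim.sub ((continuous_const_mul K).tendsto a |>.mono_left nhdsWithin_le_nhds)
  have hle : L - K * a ≤ f x - K * x := by
    refine le_of_tendsto hglim ?_
    filter_upwards [Ioo_mem_nhdsGT hx.1] with y hy
    exact hmono ⟨hy.1, hy.2.trans hx.2⟩ hx hy.2.le
  linarith

theorem Real.rpow_one_third_le_of_le_pow_three {x y : ℝ} (hx : 0 < x) (h : x ≤ y ^ 3) :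
    x ^ ((1 : ℝ) / 3) ≤ y := by
  have hy : 0 < y := (Odd.pow_pos_iff (by decide)).mp (hx.trans_le h)
  rw [one_div, Real.rpow_inv_le_iff_of_pos hx.le hy.le (by norm_num)]
  exact_mod_cast h

theorem exists_mul_rpow_le_on_Ioc_of_monotoneOn {f : ℝ → ℝ} {p C δ : ℝ} (hp : 0 ≤ p)
    (hf : MonotoneOn f (Ioi 0)) (hC : 0 < C) (hδ : 0 < δ)
    (hbound : ∀ h ∈ Ioo 0 δ, C * h ^ p ≤ f h) :
    ∃ c, 0 < c ∧ ∀ h ∈ Ioc (0 : ℝ) 1, c * h ^ p ≤ f h := by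
  set h₀ := min (δ / 2) 1
  have hh₀ : h₀ ∈ Ioo 0 δ :=
    ⟨lt_min (half_pos hδ) one_pos, (min_le_left _ _).trans_lt (half_lt_self hδ)⟩
  have hh₀p : h₀ ^ p ≤ 1 := Real.rpow_le_one hh₀.1.le (min_le_right _ _) hp
  refine ⟨C * h₀ ^ p, mul_pos hC (Real.rpow_pos_of_pos hh₀.1 p), fun h ⟨hpos, hle⟩ => ?_⟩
  have hhp : 0 ≤ h ^ p := Real.rpow_nonneg hpos.le p
  rcases le_or_gt h h₀ with hsmall | hlarge
  · calc C * h₀ ^ p * h ^ p ≤ C * 1 * h ^ p := by gcongr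
      _ = C * h ^ p := by ring
      _ ≤ f h := hbound h ⟨hpos, hsmall.trans_lt hh₀.2⟩
  · calc C * h₀ ^ p * h ^ p ≤ C * h₀ ^ p * 1 := by
          gcongr
          exact Real.rpow_le_one hpos.le hle hp
      _ ≤ f h₀ := by simpa using hbound h₀ hh₀
      _ ≤ f h := hf hh₀.1 (hh₀.1.trans hlarge) hlarge.le

theorem exists_mul_le_pow_three_of_one_sub_sq_le {A : ℝ} (hA : 0 < A) {M M' : ℝ → ℝ}
    (hdiff : ∀ h, 0 < h → HasDerivAt M (M' h) h)
    (hineq : ∀ h, 0 < h → 1 - M h ^ 2 ≤ A * M h ^ 2 * M' h)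
    (hlim : Tendsto M (𝓝[>] 0) (𝓝 0)) :
    ∃ δ, 0 < δ ∧ ∀ h ∈ Ioo 0 δ, 9 / (4 * A) * h ≤ M h ^ 3 := by
  obtain ⟨δ, hδ, hclose⟩ := Metric.tendsto_nhdsWithin_nhds.mp hlim (1 / 2) (by norm_num)
  have hsmall : ∀ h ∈ Ioo 0 δ, M h ^ 2 ≤ 1 / 4 := fun h hh => by
    have hdist : dist (M h) 0 < 1 / 2 :=
      hclose hh.1 (by rw [Real.dist_eq, sub_zero, abs_of_pos hh.1]; exact hh.2)
    rw [Real.dist_eq, sub_zero] at hdist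
    nlinarith [abs_nonneg (M h), sq_abs (M h)]
  have hderiv : ∀ h ∈ Ioo 0 δ, 9 / (4 * A) ≤ 3 * M h ^ 2 * M' h := fun h hh => by
    rw [div_le_iff₀ (by positivity)]
    nlinarith [hineq h hh.1, hsmall h hh]
  refine ⟨δ, hδ, fun h hh => ?_⟩
  simpa using add_mul_sub_le_of_hasDerivAt_of_tendsto_nhdsGT (f := fun h => M h ^ 3) (L := 0)
    (fun x hx => ((hdiff x hx.1).pow 3).congr_deriv (by norm_num)) hderiv
    (by simpa using hlim.pow 3) hh

theorem stmt_7_general (A : ℝ) (hA : 0 < A) (M M' : ℝ → ℝ)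
    (hdiff : ∀ h, 0 < h → HasDerivAt M (M' h) h)
    (hmono : ∀ h₁ h₂, 0 < h₁ → h₁ ≤ h₂ → M h₁ ≤ M h₂)
    (hineq : ∀ h, 0 < h → 1 - M h ^ 2 ≤ A * M h ^ 2 * M' h)
    (hlim : Filter.Tendsto M (nhdsWithin 0 (Set.Ioi 0)) (nhds 0)) :
    ∃ c : ℝ, 0 < c ∧ ∀ h ∈ Set.Ioc (0 : ℝ) 1, M h ≥ c * h ^ ((1 : ℝ) / 3) := by
  obtain ⟨δ, hδ, hcube⟩ := exists_mul_le_pow_three_of_one_sub_sq_le hA hdiff hineq hlim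
  have hK : 0 < 9 / (4 * A) := by positivity
  refine exists_mul_rpow_le_on_Ioc_of_monotoneOn (p := 1 / 3)
    (C := (9 / (4 * A)) ^ ((1 : ℝ) / 3)) (by norm_num) (fun x hx y _ hxy => hmono x y hx hxy)
    (Real.rpow_pos_of_pos hK _) hδ fun h hh => ?_
  rw [← Real.mul_rpow hK.le hh.1.le]
  exact Real.rpow_one_third_le_of_le_pow_three (mul_pos hK hh.1) (hcube h hh)

theorem stmt_7 (A : ℝ) (hA : 0 < A) (M M' : ℝ → ℝ)
    (hdiff : ∀ h, 0 < h → HasDerivAt M (M' h) h)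
    (hmono : ∀ h₁ h₂, 0 < h₁ → h₁ ≤ h₂ → M h₁ ≤ M h₂)
    (hrange : ∀ h, 0 < h → M h ∈ Set.Icc (0 : ℝ) 1)
    (hineq : ∀ h, 0 < h → 1 - M h ^ 2 ≤ A * M h ^ 2 * M' h)
    (hlim : Filter.Tendsto M (nhdsWithin 0 (Set.Ioi 0)) (nhds 0)) :
    ∃ c : ℝ, 0 < c ∧ ∀ h ∈ Set.Ioc (0 : ℝ) 1, M h ≥ c * h ^ ((1 : ℝ) / 3) :=
  stmt_7_general A hA M M' hdiff hmono hineq hlim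
end

section
/- Consider Bernoulli bond percolation on a countable graph where each edge $\{x,y\}$ is independently open with probability $1 - e^{-\beta J_{x,y}}$, $J_{x,y} \geq 0$. Let $S$ be a finite set of vertices with $u \in S$, and let $A \supseteq S$ and $B$ with $B \cap S = \emptyset$. Then $\mathbb{P}_\beta[u \leftrightarrow B \text{ in } A] \leq \sum_{x \in S} \sum_{y \notin S} (1 - e^{-\beta J_{x,y}}) \, \mathbb{P}_\beta[u \leftrightarrow x \text{ in } S] \, \mathbb{P}_\beta[y \leftrightarrow B \text{ in } A]$, where $u \leftrightarrow x$ in $S$ means there is an open path from $u$ to $x$ with all vertices in $S$. -/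
open MeasureTheory

/-- `connIn A ω u x`: in the percolation configuration `ω`, the vertices `u` and `x`
are connected by an open path all of whose vertices lie in `A`. -/
def connIn {V : Type*} (A : Set V) (ω : Sym2 V → Bool) (u x : V) : Prop :=
  ∃ (K : ℕ) (v : ℕ → V), v 0 = u ∧ v K = x ∧ (∀ k ≤ K, v k ∈ A) ∧
    ∀ k < K, ω s(v k, v (k + 1)) = true

/-- `connInSet A ω u B`: `u` is connected in `A` to some vertex of `B`. -/
def connInSet {V : Type*} (A : Set V) (ω : Sym2 V → Bool) (u : V) (B : Set V) : Prop :=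
  ∃ b ∈ B, connIn A ω u b

/-!
Let `C` be the open cluster of `u` inside `S`. An open path from `u` to `B` leaves `C` for the
last time through an open edge `{x, y}` with `x ∈ C`; then `y ∉ S`, since otherwise `y` would lie
in `C`, and the rest of the path avoids `C`. The event that the cluster equals `C` depends only on
edges touching `C` inside `S`, the exit edge is not one of them, and the rest of the path uses only
edges avoiding `C`, so the three events are independent. Summed over the clusters `C ∋ x`, the
probabilities of the first event add up to at most `P[u ↔ x in S]`.
-/

open ProbabilityTheory

section

variable {V : Type*}

section Paths

variable {A A' C : Set V} {ω : Sym2 V → Bool} {u x y b : V}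

theorem connIn.mono (h : A ⊆ A') (hc : connIn A ω u x) : connIn A' ω u x := by
  obtain ⟨K, v, h0, hK, hA, hω⟩ := hc
  exact ⟨K, v, h0, hK, fun k hk => h (hA k hk), hω⟩

theorem connIn.left_mem (hc : connIn A ω u x) : u ∈ A := by
  obtain ⟨K, v, rfl, -, hA, -⟩ := hc
  exact hA 0 K.zero_le

theorem connIn.right_mem (hc : connIn A ω u x) : x ∈ A := by
  obtain ⟨K, v, -, rfl, hA, -⟩ := hc
  exact hA K le_rfl

theorem connIn_refl (hu : u ∈ A) : connIn A ω u u :=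
  ⟨0, fun _ => u, rfl, rfl, fun _ _ => hu, fun k hk => absurd hk (Nat.not_lt_zero k)⟩

theorem connIn.snoc (hc : connIn A ω u x) (hy : y ∈ A) (he : ω s(x, y) = true) :
    connIn A ω u y := by
  obtain ⟨K, v, h0, rfl, hA, hω⟩ := hc
  refine ⟨K + 1, fun k => if k ≤ K then v k else y, by simpa using h0, by simp, ?_, ?_⟩
  · intro k _
    dsimp only
    split_ifs with hk
    exacts [hA k hk, hy]
  · intro k hk
    rcases Nat.lt_or_ge k K with hkK | hkK
    · simpa [hkK.le, Nat.succ_le_of_lt hkK] using hω k hkK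
    · obtain rfl : k = K := by omega
      simpa using he

theorem connIn_prefix {K : ℕ} {v : ℕ → V} (hA : ∀ k ≤ K, v k ∈ A)
    (hω : ∀ k < K, ω s(v k, v (k + 1)) = true) {j : ℕ} (hj : j ≤ K) : connIn A ω (v 0) (v j) :=
  ⟨j, v, rfl, rfl, fun k hk => hA k (hk.trans hj), fun k hk => hω k (hk.trans_le hj)⟩

theorem connIn.exists_exit (hc : connIn A ω u b) (hu : u ∈ C) (hb : b ∉ C) :
    ∃ x ∈ C, ∃ y, ω s(x, y) = true ∧ connIn (A \ C) ω y b := by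
  obtain ⟨K, v, rfl, rfl, hA, hω⟩ := hc
  induction K with
  | zero => exact absurd hu hb
  | succ K ih =>
    by_cases hK : v K ∈ C
    · exact ⟨v K, hK, v (K + 1), hω K K.lt_succ_self, connIn_refl ⟨hA _ le_rfl, hb⟩⟩
    · obtain ⟨x, hx, y, hxy, hy⟩ :=
        ih hK (fun k hk => hA k (by omega)) (fun k hk => hω k (by omega))
      exact ⟨x, hx, y, hxy, hy.snoc ⟨hA _ le_rfl, hb⟩ (hω K K.lt_succ_self)⟩

theorem connIn_iff_exists_fin :
    connIn A ω u x ↔ ∃ (K : ℕ) (w : Fin (K + 1) → V), w 0 = u ∧ w (Fin.last K) = x ∧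
      (∀ i, w i ∈ A) ∧ ∀ k : Fin K, ω s(w k.castSucc, w k.succ) = true := by
  constructor
  · rintro ⟨K, v, h0, hK, hA, hω⟩
    exact ⟨K, fun i => v i, by simpa using h0, by simpa using hK, fun i => hA i (by omega),
      fun k => by simpa using hω k k.isLt⟩
  · rintro ⟨K, w, h0, hK, hA, hω⟩
    refine ⟨K, fun k => w ⟨min k K, by omega⟩, ?_, ?_, fun k _ => hA _, fun k hk => ?_⟩
    · exact (congrArg w (Fin.ext (by simp))).trans h0
    · exact (congrArg w (Fin.ext (by simp))).trans hK
    · convert hω ⟨k, hk⟩ using 3 <;> simp [hk.le, Nat.succ_le_of_lt hk]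

end Paths

section Measurability

variable [Countable V] {m : MeasurableSpace (Sym2 V → Bool)} {A : Set V}

theorem measurableSet_connIn
    (hm : ∀ a ∈ A, ∀ b ∈ A, MeasurableSet[m] {ω : Sym2 V → Bool | ω s(a, b) = true}) (u x : V) :
    MeasurableSet[m] {ω | connIn A ω u x} := by
  have : {ω | connIn A ω u x} = ⋃ (K : ℕ) (w : Fin (K + 1) → V)
      (_ : w 0 = u ∧ w (Fin.last K) = x ∧ ∀ i, w i ∈ A),
      ⋂ k : Fin K, {ω : Sym2 V → Bool | ω s(w k.castSucc, w k.succ) = true} := by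
    ext ω
    simp only [Set.mem_ofPred_eq, Set.mem_iUnion, Set.mem_iInter, connIn_iff_exists_fin]
    tauto
  rw [this]
  exact .iUnion fun K => .iUnion fun w => .iUnion fun h => .iInter fun k =>
    hm _ (h.2.2 _) _ (h.2.2 _)

theorem measurableSet_connInSet
    (hm : ∀ a ∈ A, ∀ b ∈ A, MeasurableSet[m] {ω : Sym2 V → Bool | ω s(a, b) = true})
    (u : V) (B : Set V) : MeasurableSet[m] {ω | connInSet A ω u B} := by
  have : {ω | connInSet A ω u B} = ⋃ b ∈ B, {ω | connIn A ω u b} := by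
    ext ω
    simp [connInSet]
  rw [this]
  exact .biUnion B.to_countable fun b _ => measurableSet_connIn hm u b

end Measurability

section EdgeSigma

abbrev edgeSigma (T : Set (Sym2 V)) : MeasurableSpace (Sym2 V → Bool) :=
  ⨆ e ∈ T, MeasurableSpace.comap (fun ω => ω e) inferInstance

variable {T T' : Set (Sym2 V)}

theorem measurableSet_edgeSigma {e : Sym2 V} (he : e ∈ T) (b : Bool) :
    MeasurableSet[edgeSigma T] {ω : Sym2 V → Bool | ω e = b} :=
  Measurable.of_comap_le (le_iSup₂ (f := fun e (_ : e ∈ T) =>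
    MeasurableSpace.comap (fun ω : Sym2 V → Bool => ω e) inferInstance) e he)
    (measurableSet_singleton b)

theorem edgeSigma_mono (h : T ⊆ T') : edgeSigma T ≤ edgeSigma T' :=
  iSup₂_le fun e he => le_iSup₂ (f := fun e (_ : e ∈ T') =>
    MeasurableSpace.comap (fun ω : Sym2 V → Bool => ω e) inferInstance) e (h he)

theorem edgeSigma_le_pi (T : Set (Sym2 V)) : edgeSigma T ≤ MeasurableSpace.pi :=
  iSup₂_le fun e _ => (measurable_pi_apply e).comap_le

theorem measure_inter_inter_of_disjoint {P : Measure (Sym2 V → Bool)}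
    (hind : iIndepFun (fun e ω => ω e) P) {T₁ T₂ T₃ : Set (Sym2 V)}
    (h₁₂ : Disjoint T₁ T₂) (h₁₃ : Disjoint T₁ T₃) (h₂₃ : Disjoint T₂ T₃)
    {E₁ E₂ E₃ : Set (Sym2 V → Bool)} (hE₁ : MeasurableSet[edgeSigma T₁] E₁)
    (hE₂ : MeasurableSet[edgeSigma T₂] E₂) (hE₃ : MeasurableSet[edgeSigma T₃] E₃) :
    P (E₁ ∩ E₂ ∩ E₃) = P E₁ * P E₂ * P E₃ := by
  have hindep {T T' : Set (Sym2 V)} (h : Disjoint T T') :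
      Indep (edgeSigma T) (edgeSigma T') P :=
    indep_iSup_of_disjoint (fun e => (measurable_pi_apply e).comap_le) hind h
  have hE₁₂ : MeasurableSet[edgeSigma (T₁ ∪ T₂)] (E₁ ∩ E₂) :=
    (edgeSigma_mono Set.subset_union_left _ hE₁).inter
      (edgeSigma_mono Set.subset_union_right _ hE₂)
  rw [(Indep_iff _ _ P).1 (hindep (h₁₃.union_left h₂₃)) _ _ hE₁₂ hE₃,
    (Indep_iff _ _ P).1 (hindep h₁₂) _ _ hE₁ hE₂]

end EdgeSigma

section Cluster

/-- `C` is the open cluster of `u` in `S`, phrased so that it visibly depends only on the edges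
touching `C` inside `S`. -/
def IsClusterIn (S : Set V) (ω : Sym2 V → Bool) (u : V) (C : Set V) : Prop :=
  (∀ x ∈ C, connIn C ω u x) ∧ ∀ x ∈ C, ∀ y ∈ S \ C, ω s(x, y) = false

variable {S C C' : Set V} {ω : Sym2 V → Bool} {u x : V}

theorem IsClusterIn.connIn_iff (h : IsClusterIn S ω u C) (hCS : C ⊆ S) (hx : x ∈ C) (z : V) :
    connIn S ω u z ↔ z ∈ C := by
  refine ⟨?_, fun hz => (h.1 z hz).mono hCS⟩
  rintro ⟨K, v, rfl, rfl, hS, hω⟩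
  induction K with
  | zero => exact (h.1 x hx).left_mem
  | succ K ih =>
    have hK : v K ∈ C := ih (fun k hk => hS k (by omega)) (fun k hk => hω k (by omega))
    by_contra hK'
    simpa [h.2 _ hK _ ⟨hS _ le_rfl, hK'⟩] using hω K K.lt_succ_self

theorem IsClusterIn.eq (h : IsClusterIn S ω u C) (h' : IsClusterIn S ω u C') (hCS : C ⊆ S)
    (hC'S : C' ⊆ S) (hx : x ∈ C) (hx' : x ∈ C') : C = C' :=
  Set.ext fun z => (h.connIn_iff hCS hx z).symm.trans (h'.connIn_iff hC'S hx' z)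

theorem isClusterIn_setOf_connIn : IsClusterIn S ω u {z | connIn S ω u z} := by
  refine ⟨fun x hx => ?_, fun x hx y hy => Bool.eq_false_iff.2 fun he => hy.2 (hx.snoc hy.1 he)⟩
  obtain ⟨K, v, rfl, rfl, hS, hω⟩ := hx
  exact ⟨K, v, rfl, rfl, fun k hk => connIn_prefix hS hω hk, hω⟩

theorem measurableSet_isClusterIn [Countable V] (hCS : C ⊆ S) :
    MeasurableSet[edgeSigma {e | (∃ v ∈ e, v ∈ C) ∧ ∀ v ∈ e, v ∈ S}]
      {ω | IsClusterIn S ω u C} := by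
  have hedge {a b : V} (ha : a ∈ C) (hb : b ∈ S) (β : Bool) :
      MeasurableSet[edgeSigma {e | (∃ v ∈ e, v ∈ C) ∧ ∀ v ∈ e, v ∈ S}]
        {ω : Sym2 V → Bool | ω s(a, b) = β} :=
    measurableSet_edgeSigma (e := s(a, b))
      (Set.mem_ofPred.2 ⟨⟨a, Sym2.mem_mk_left a b, ha⟩, by simp [hCS ha, hb]⟩) β
  simp only [IsClusterIn, Set.ofPred_and, Set.ofPred_forall]
  exact .inter (.iInter fun x => .iInter fun _ => measurableSet_connIn
      (fun a ha b hb => hedge ha (hCS hb) true) u x)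
    (.iInter fun x => .iInter fun hx => .iInter fun y => .iInter fun hy => hedge hx hy.1 false)

end Cluster

section Probability

variable [Countable V] {P : Measure (Sym2 V → Bool)} (hind : iIndepFun (fun e ω => ω e) P)
  {S A B C : Set V} {u x y : V}
include hind

theorem measure_isClusterIn_inter_exit_le (hCS : C ⊆ S) (hx : x ∈ C) (hy : y ∉ S) :
    P ({ω | IsClusterIn S ω u C} ∩ {ω | ω s(x, y) = true} ∩ {ω | connInSet (A \ C) ω y B}) ≤
      P {ω | IsClusterIn S ω u C} *
        (P {ω | ω s(x, y) = true} * P {ω | connInSet A ω y B}) := by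
  have h₁₂ : Disjoint {e : Sym2 V | (∃ v ∈ e, v ∈ C) ∧ ∀ v ∈ e, v ∈ S} {s(x, y)} :=
    Set.disjoint_singleton_right.2 fun he => hy (he.2 y (Sym2.mem_mk_right x y))
  have h₁₃ : Disjoint {e : Sym2 V | (∃ v ∈ e, v ∈ C) ∧ ∀ v ∈ e, v ∈ S} {e | ∀ v ∈ e, v ∉ C} :=
    Set.disjoint_left.2 fun e ⟨⟨v, hve, hvC⟩, _⟩ he => he v hve hvC
  have h₂₃ : Disjoint {s(x, y)} {e : Sym2 V | ∀ v ∈ e, v ∉ C} :=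
    Set.disjoint_singleton_left.2 fun he => he x (Sym2.mem_mk_left x y) hx
  have hoff : MeasurableSet[edgeSigma {e : Sym2 V | ∀ v ∈ e, v ∉ C}]
      {ω | connInSet (A \ C) ω y B} :=
    measurableSet_connInSet (fun a ha b hb =>
      measurableSet_edgeSigma (e := s(a, b)) (by simp [ha.2, hb.2]) true) y B
  rw [measure_inter_inter_of_disjoint hind h₁₂ h₁₃ h₂₃ (measurableSet_isClusterIn hCS)
    (measurableSet_edgeSigma (Set.mem_singleton _) true) hoff, mul_assoc]
  gcongr with ω
  rintro ⟨b, hb, hc⟩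
  exact ⟨b, hb, hc.mono Set.sdiff_subset⟩

theorem measure_exit_le (hS : S.Finite) (hy : y ∉ S) :
    P {ω | connIn S ω u x ∧ ω s(x, y) = true ∧
        connInSet (A \ {z | connIn S ω u z}) ω y B} ≤
      P {ω | ω s(x, y) = true} * (P {ω | connIn S ω u x} * P {ω | connInSet A ω y B}) := by
  set clusters : Set (Set V) := {C | C ⊆ S ∧ x ∈ C}
  have hcount : clusters.Countable := (hS.finite_subsets.subset fun C hC => hC.1).countable
  have hsub : {ω | connIn S ω u x ∧ ω s(x, y) = true ∧
      connInSet (A \ {z | connIn S ω u z}) ω y B} ⊆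
      ⋃ C ∈ clusters, {ω | IsClusterIn S ω u C} ∩ {ω | ω s(x, y) = true} ∩
        {ω | connInSet (A \ C) ω y B} :=
    fun ω ⟨hx, hxy, hB⟩ => Set.mem_biUnion (x := {z | connIn S ω u z})
      (Set.mem_ofPred.2 ⟨fun z hz => hz.right_mem, hx⟩) ⟨⟨isClusterIn_setOf_connIn, hxy⟩, hB⟩
  have hsum : ∑' C : clusters, P {ω | IsClusterIn S ω u C} ≤ P {ω | connIn S ω u x} := by
    have hdisj : clusters.PairwiseDisjoint fun C => {ω | IsClusterIn S ω u C} :=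
      fun C hC C' hC' hne => Set.disjoint_left.2 fun ω h h' =>
        hne (h.eq h' hC.1 hC'.1 hC.2 hC'.2)
    rw [← measure_biUnion hcount hdisj
      fun C hC => edgeSigma_le_pi _ _ (measurableSet_isClusterIn hC.1)]
    exact measure_mono (Set.iUnion₂_subset fun C hC ω h => (h.connIn_iff hC.1 hC.2 x).2 hC.2)
  calc _ ≤ ∑' C : clusters, P ({ω | IsClusterIn S ω u C} ∩ {ω | ω s(x, y) = true} ∩
          {ω | connInSet (A \ C) ω y B}) :=
        (measure_mono hsub).trans (measure_biUnion_le P hcount _)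
    _ ≤ ∑' C : clusters, P {ω | IsClusterIn S ω u C} *
          (P {ω | ω s(x, y) = true} * P {ω | connInSet A ω y B}) :=
        ENNReal.tsum_le_tsum fun C =>
          measure_isClusterIn_inter_exit_le hind C.2.1 C.2.2 hy
    _ ≤ P {ω | connIn S ω u x} * (P {ω | ω s(x, y) = true} * P {ω | connInSet A ω y B}) := by
        rw [ENNReal.tsum_mul_right]
        gcongr
    _ = _ := by ring

theorem measure_connInSet_le_tsum (hS : S.Finite) (hu : u ∈ S) (hBS : B ∩ S = ∅) :
    P {ω | connInSet A ω u B} ≤ ∑' x : S, ∑' y : (Sᶜ : Set V),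
      P {ω | ω s(x, y) = true} * (P {ω | connIn S ω u x} * P {ω | connInSet A ω y B}) := by
  have hsub : {ω | connInSet A ω u B} ⊆ ⋃ (x : S) (y : (Sᶜ : Set V)),
      {ω | connIn S ω u x ∧ ω s(x, y) = true ∧
        connInSet (A \ {z | connIn S ω u z}) ω y B} := by
    rintro ω ⟨b, hb, hc⟩
    obtain ⟨x, hx, y, hxy, hy⟩ := hc.exists_exit (C := {z | connIn S ω u z}) (connIn_refl hu)
      fun hbu => Set.eq_empty_iff_forall_notMem.1 hBS b ⟨hb, hbu.right_mem⟩
    have hyS : y ∉ S := fun hyS => hy.left_mem.2 (hx.snoc hyS hxy)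
    exact Set.mem_iUnion₂.2 ⟨⟨x, hx.right_mem⟩, ⟨y, hyS⟩, hx, hxy, b, hb, hy⟩
  calc _ ≤ ∑' (x : S) (y : (Sᶜ : Set V)), P {ω | connIn S ω u x ∧ ω s(x, y) = true ∧
          connInSet (A \ {z | connIn S ω u z}) ω y B} :=
        (measure_mono hsub).trans <|
          (measure_iUnion_le _).trans (ENNReal.tsum_le_tsum fun _ => measure_iUnion_le _)
    _ ≤ _ := ENNReal.tsum_le_tsum fun x => ENNReal.tsum_le_tsum fun y =>
        measure_exit_le hind hS y.2

end Probability

end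

theorem stmt_9_general {V : Type*} [Countable V] (β : ℝ)
    (J : V → V → ℝ)
    (P : Measure (Sym2 V → Bool))
    (hind : ProbabilityTheory.iIndepFun
      (fun e ω => ω e) P)
    (hmarg : ∀ x y : V, P {ω | ω s(x, y) = true} =
      ENNReal.ofReal (1 - Real.exp (-β * J x y)))
    (S A B : Set V) (hS : S.Finite) (u : V) (hu : u ∈ S)
    (hBS : B ∩ S = ∅) :
    P {ω | connInSet A ω u B} ≤
      ∑' x : S, ∑' y : (Sᶜ : Set V),
        ENNReal.ofReal (1 - Real.exp (-β * J x y)) *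
          (P {ω | connIn S ω u x} * P {ω | connInSet A ω (y : V) B}) := by
  simpa only [hmarg] using measure_connInSet_le_tsum hind hS hu hBS

theorem stmt_9 {V : Type*} [Countable V] (β : ℝ) (hβ : 0 < β)
    (J : V → V → ℝ) (hJsymm : ∀ x y, J x y = J y x) (hJ : ∀ x y, 0 ≤ J x y)
    (P : Measure (Sym2 V → Bool)) [IsProbabilityMeasure P]
    (hind : ProbabilityTheory.iIndepFun
      (fun e ω => ω e) P)
    (hmarg : ∀ x y : V, P {ω | ω s(x, y) = true} =
      ENNReal.ofReal (1 - Real.exp (-β * J x y)))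
    (S A B : Set V) (hS : S.Finite) (u : V) (hu : u ∈ S) (hSA : S ⊆ A)
    (hBS : B ∩ S = ∅) :
    P {ω | connInSet A ω u B} ≤
      ∑' x : S, ∑' y : (Sᶜ : Set V),
        ENNReal.ofReal (1 - Real.exp (-β * J x y)) *
          (P {ω | connIn S ω u x} * P {ω | connInSet A ω (y : V) B}) :=
  stmt_9_general β J P hind hmarg S A B hS u hu hBS
end
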